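/- Let q_n denote the number of independent dominating sets of the para-chain square cactus Q_n. Then q_1 = 2, q_2 = 4, q_3 = 7, and for every n ≥ 4, q_n = 2q_{n-1} − q_{n-2} + q_{n-3}. -/

import Mathlib

/-- `S` is an independent dominating set of `G`: pairwise non-adjacent, and every
vertex outside `S` has a neighbour in `S`. -/
def IsIndepDomSet {V : Type*} (G : SimpleGraph V) (S : Finset V) : Prop :=
  (∀ v ∈ S, ∀ w ∈ S, ¬ G.Adj v w) ∧ ∀ v, v ∉ S → ∃ w ∈ S, G.Adj v w

/-- The para-chain square cactus `Q n`: `Sum.inl i` is the cut vertex `x i`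
(`0 ≤ i ≤ n`), `Sum.inr (Sum.inl k)` is `u (k+1)` and `Sum.inr (Sum.inr k)` is
`w (k+1)` (`0 ≤ k ≤ n-1`); the `i`-th square (`1 ≤ i ≤ n`) is the four-cycle
`x (i-1) – u i – x i – w i – x (i-1)`. -/
def paraSq (n : ℕ) : SimpleGraph (Fin (n + 1) ⊕ (Fin n ⊕ Fin n)) :=
  SimpleGraph.fromRel fun p q =>
    match p, q with
    | Sum.inl i, Sum.inr (Sum.inl k) => (i : ℕ) = (k : ℕ) ∨ (i : ℕ) = (k : ℕ) + 1
    | Sum.inl i, Sum.inr (Sum.inr k) => (i : ℕ) = (k : ℕ) ∨ (i : ℕ) = (k : ℕ) + 1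
    | _, _ => False

/-- The number of independent dominating sets of the para-chain square cactus `Q n`. -/
noncomputable def numIDSParaSq (n : ℕ) : ℕ :=
  Nat.card {S : Finset (Fin (n + 1) ⊕ (Fin n ⊕ Fin n)) // IsIndepDomSet (paraSq n) S}

/-!
An independent dominating set `S` of `Q n` is determined by the cut vertices it contains: a
side vertex `u i` or `w i` is in `S` exactly when neither `x (i-1)` nor `x i` is (it must be
dominated, and its only neighbours are these two). Such a pattern of cut vertices comes from an
independent dominating set iff every cut vertex outside `S` has a neighbour on the path
`x 0 – ⋯ – x n` that is also outside `S`, since that is what it takes to be dominated by a side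
vertex. So `q n = f (n + 1)`, where `f m` counts the Boolean words of length `m` in which every
`false` has a `false` neighbour. Splitting off the first letter gives
`f (m + 2) = f (m + 1) + g m` and `g (m + 1) = f m + g m`, where `g` counts the words whose first
letter is exempt from the condition; eliminating `g` gives the recurrence.
-/

open SimpleGraph Sum

lemma pathGraph_succ_adj_iff {n : ℕ} {i j : Fin (n + 1)} :
    (pathGraph (n + 1)).Adj i j ↔
      ∃ k : Fin n, (i = k.castSucc ∧ j = k.succ) ∨ (i = k.succ ∧ j = k.castSucc) := by
  simp only [pathGraph_adj, Fin.ext_iff, Fin.val_castSucc, Fin.val_succ]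
  constructor
  · rintro (h | h)
    · exact ⟨⟨i, by omega⟩, Or.inl ⟨rfl, h.symm⟩⟩
    · exact ⟨⟨j, by omega⟩, Or.inr ⟨h.symm, rfl⟩⟩
  · rintro ⟨k, ⟨hi, hj⟩ | ⟨hi, hj⟩⟩ <;> omega

@[simp]
lemma pathGraph_adj_succ_succ {m : ℕ} {i j : Fin m} :
    (pathGraph (m + 1)).Adj i.succ j.succ ↔ (pathGraph m).Adj i j := by
  simp [pathGraph_adj]

@[simp]
lemma pathGraph_adj_zero_succ {m : ℕ} {j : Fin m} :
    (pathGraph (m + 1)).Adj 0 j.succ ↔ (j : ℕ) = 0 := by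
  simp [pathGraph_adj]

@[simp]
lemma pathGraph_adj_succ_zero {m : ℕ} {i : Fin m} :
    (pathGraph (m + 1)).Adj i.succ 0 ↔ (i : ℕ) = 0 := by
  simp [pathGraph_adj]

lemma Nat.card_subtype_fin_cons {m : ℕ} {α : Type*} [Fintype α] (P : (Fin (m + 1) → α) → Prop) :
    Nat.card {a // P a} = ∑ b, Nat.card {t // P (Fin.cons b t)} := by
  rw [← Nat.card_sigma]
  exact Nat.card_congr <|
    ((Fin.consEquiv fun _ => α).subtypeEquiv fun _ => Iff.rfl).symm.trans
      (Equiv.subtypeProdEquivSigmaSubtype fun b t => P (Fin.cons b t))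

/-- `p` stands for a `false` just before `a`, which exempts the first entry. -/
def NoIsolatedFalse {m : ℕ} (p : Bool) (a : Fin m → Bool) : Prop :=
  ∀ i, a i = false → (p ∧ (i : ℕ) = 0) ∨ ∃ j, (pathGraph m).Adj i j ∧ a j = false

lemma noIsolatedFalse_cons {m : ℕ} {p b : Bool} {t : Fin m → Bool} :
    NoIsolatedFalse p (Fin.cons b t : Fin (m + 1) → Bool) ↔
      (b = false → p ∨ ∃ j : Fin m, (j : ℕ) = 0 ∧ t j = false) ∧ NoIsolatedFalse (!b) t := by
  cases b <;> simp [NoIsolatedFalse, Fin.forall_fin_succ, Fin.exists_fin_succ]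

noncomputable def numNoIsolatedFalse (p : Bool) (m : ℕ) : ℕ :=
  Nat.card {a : Fin m → Bool // NoIsolatedFalse p a}

lemma numNoIsolatedFalse_succ (p : Bool) (m : ℕ) :
    numNoIsolatedFalse p (m + 1) = numNoIsolatedFalse false m +
      Nat.card {t : Fin m → Bool // (p ∨ ∃ j : Fin m, (j : ℕ) = 0 ∧ t j = false) ∧
        NoIsolatedFalse true t} := by
  rw [numNoIsolatedFalse, Nat.card_subtype_fin_cons, Fintype.sum_bool]
  simp [noIsolatedFalse_cons, numNoIsolatedFalse]

lemma numNoIsolatedFalse_zero (p : Bool) : numNoIsolatedFalse p 0 = 1 := by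
  simp [numNoIsolatedFalse, NoIsolatedFalse]

lemma numNoIsolatedFalse_true_succ (m : ℕ) :
    numNoIsolatedFalse true (m + 1) = numNoIsolatedFalse false m + numNoIsolatedFalse true m := by
  rw [numNoIsolatedFalse_succ]
  simp [numNoIsolatedFalse]

lemma numNoIsolatedFalse_false_one : numNoIsolatedFalse false 1 = 1 := by
  simp [numNoIsolatedFalse_succ, numNoIsolatedFalse_zero]

lemma numNoIsolatedFalse_false_succ_succ (m : ℕ) :
    numNoIsolatedFalse false (m + 2) =
      numNoIsolatedFalse false (m + 1) + numNoIsolatedFalse true m := by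
  rw [numNoIsolatedFalse_succ, Nat.card_subtype_fin_cons, Fintype.sum_bool]
  simp [noIsolatedFalse_cons, numNoIsolatedFalse]

lemma numNoIsolatedFalse_false_recurrence (m : ℕ) :
    numNoIsolatedFalse false (m + 3) + numNoIsolatedFalse false (m + 1) =
      2 * numNoIsolatedFalse false (m + 2) + numNoIsolatedFalse false m := by
  have h₂ := numNoIsolatedFalse_false_succ_succ m
  have h₃ : numNoIsolatedFalse false (m + 3) =
      numNoIsolatedFalse false (m + 2) + numNoIsolatedFalse true (m + 1) :=
    numNoIsolatedFalse_false_succ_succ (m + 1)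
  have h₁ := numNoIsolatedFalse_true_succ m
  omega

lemma numNoIsolatedFalse_false_two_three_four :
    numNoIsolatedFalse false 2 = 2 ∧ numNoIsolatedFalse false 3 = 4 ∧
      numNoIsolatedFalse false 4 = 7 := by
  simp [numNoIsolatedFalse_false_succ_succ, numNoIsolatedFalse_true_succ,
    numNoIsolatedFalse_zero, numNoIsolatedFalse_false_one]

section ParaSq

variable {n : ℕ}

@[simp]
lemma paraSq_not_adj_inl_inl (i j : Fin (n + 1)) : ¬ (paraSq n).Adj (inl i) (inl j) := by
  simp [paraSq]

@[simp]
lemma paraSq_not_adj_inr_inr (e f : Fin n ⊕ Fin n) : ¬ (paraSq n).Adj (inr e) (inr f) := by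
  cases e <;> cases f <;> simp [paraSq]

/-- `Sum.elim id id e` is the index of the square containing the side vertex `e`. -/
lemma paraSq_adj_inl_inr {i : Fin (n + 1)} {e : Fin n ⊕ Fin n} :
    (paraSq n).Adj (inl i) (inr e) ↔
      i = (Sum.elim id id e).castSucc ∨ i = (Sum.elim id id e).succ := by
  cases e <;> simp [paraSq, Fin.ext_iff]

def paraSqSetOfCut (a : Fin (n + 1) → Bool) : Finset (Fin (n + 1) ⊕ (Fin n ⊕ Fin n)) :=
  Finset.univ.filter fun v =>
    Sum.elim a (fun e => !a (Sum.elim id id e).castSucc && !a (Sum.elim id id e).succ) v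

@[simp]
lemma inl_mem_paraSqSetOfCut {a : Fin (n + 1) → Bool} {i : Fin (n + 1)} :
    inl i ∈ paraSqSetOfCut a ↔ a i = true := by
  simp [paraSqSetOfCut]

@[simp]
lemma inr_mem_paraSqSetOfCut {a : Fin (n + 1) → Bool} {e : Fin n ⊕ Fin n} :
    inr e ∈ paraSqSetOfCut a ↔
      a (Sum.elim id id e).castSucc = false ∧ a (Sum.elim id id e).succ = false := by
  simp [paraSqSetOfCut]

lemma IsIndepDomSet.eq_paraSqSetOfCut {S : Finset (Fin (n + 1) ⊕ (Fin n ⊕ Fin n))}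
    (hS : IsIndepDomSet (paraSq n) S) : S = paraSqSetOfCut fun i => decide (inl i ∈ S) := by
  obtain ⟨hindep, hdom⟩ := hS
  ext (i | e)
  · simp
  · simp only [inr_mem_paraSqSetOfCut, decide_eq_false_iff_not]
    constructor
    · intro he
      exact ⟨fun hi => hindep _ hi _ he (paraSq_adj_inl_inr.mpr (Or.inl rfl)),
        fun hi => hindep _ hi _ he (paraSq_adj_inl_inr.mpr (Or.inr rfl))⟩
    · rintro ⟨h₀, h₁⟩
      by_contra he
      obtain ⟨w | f, hw, hadj⟩ := hdom _ he
      · rcases paraSq_adj_inl_inr.mp hadj.symm with rfl | rfl <;> contradiction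
      · exact paraSq_not_adj_inr_inr _ _ hadj

lemma paraSqSetOfCut_indep (a : Fin (n + 1) → Bool) :
    ∀ v ∈ paraSqSetOfCut a, ∀ w ∈ paraSqSetOfCut a, ¬ (paraSq n).Adj v w := by
  have key : ∀ i e, inl i ∈ paraSqSetOfCut a → inr e ∈ paraSqSetOfCut a →
      ¬ (paraSq n).Adj (inl i) (inr e) := by
    intro i e hi he hadj
    rw [inl_mem_paraSqSetOfCut] at hi
    rw [inr_mem_paraSqSetOfCut] at he
    rcases paraSq_adj_inl_inr.mp hadj with rfl | rfl <;> simp_all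
  rintro (i | e) hv (j | f) hw hadj
  · exact paraSq_not_adj_inl_inl i j hadj
  · exact key i f hv hw hadj
  · exact key j e hw hv hadj.symm
  · exact paraSq_not_adj_inr_inr e f hadj

lemma exists_adj_inr_mem_paraSqSetOfCut {a : Fin (n + 1) → Bool} {e : Fin n ⊕ Fin n}
    (he : inr e ∉ paraSqSetOfCut a) : ∃ w ∈ paraSqSetOfCut a, (paraSq n).Adj (inr e) w := by
  simp only [inr_mem_paraSqSetOfCut, not_and_or, Bool.not_eq_false] at he
  rcases he with h | h
  · exact ⟨inl _, inl_mem_paraSqSetOfCut.mpr h, (paraSq_adj_inl_inr.mpr (Or.inl rfl)).symm⟩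
  · exact ⟨inl _, inl_mem_paraSqSetOfCut.mpr h, (paraSq_adj_inl_inr.mpr (Or.inr rfl)).symm⟩

lemma exists_adj_inl_mem_paraSqSetOfCut_iff {a : Fin (n + 1) → Bool} {i : Fin (n + 1)} :
    (∃ w ∈ paraSqSetOfCut a, (paraSq n).Adj (inl i) w) ↔
      a i = false ∧ ∃ j, (pathGraph (n + 1)).Adj i j ∧ a j = false := by
  constructor
  · rintro ⟨j | e, hw, hadj⟩
    · exact absurd hadj (paraSq_not_adj_inl_inl i j)
    · rw [inr_mem_paraSqSetOfCut] at hw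
      rcases paraSq_adj_inl_inr.mp hadj with rfl | rfl
      · exact ⟨hw.1, _, pathGraph_succ_adj_iff.mpr ⟨_, Or.inl ⟨rfl, rfl⟩⟩, hw.2⟩
      · exact ⟨hw.2, _, pathGraph_succ_adj_iff.mpr ⟨_, Or.inr ⟨rfl, rfl⟩⟩, hw.1⟩
  · rintro ⟨hi, j, hij, hj⟩
    obtain ⟨k, ⟨rfl, rfl⟩ | ⟨rfl, rfl⟩⟩ := pathGraph_succ_adj_iff.mp hij
    · exact ⟨inr (inl k), by simp [hi, hj], paraSq_adj_inl_inr.mpr (Or.inl rfl)⟩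
    · exact ⟨inr (inl k), by simp [hi, hj], paraSq_adj_inl_inr.mpr (Or.inr rfl)⟩

lemma isIndepDomSet_paraSqSetOfCut_iff {a : Fin (n + 1) → Bool} :
    IsIndepDomSet (paraSq n) (paraSqSetOfCut a) ↔ NoIsolatedFalse false a := by
  constructor
  · rintro ⟨-, hdom⟩ i hi
    exact Or.inr (exists_adj_inl_mem_paraSqSetOfCut_iff.mp (hdom _ (by simpa using hi))).2
  · refine fun h => ⟨paraSqSetOfCut_indep a, ?_⟩
    rintro (i | e) hv
    · have hi : a i = false := by simpa using hv
      exact exists_adj_inl_mem_paraSqSetOfCut_iff.mpr ⟨hi, (h i hi).resolve_left (by simp)⟩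
    · exact exists_adj_inr_mem_paraSqSetOfCut hv

def paraSqIndepDomSetEquiv (n : ℕ) :
    {S // IsIndepDomSet (paraSq n) S} ≃ {a : Fin (n + 1) → Bool // NoIsolatedFalse false a} where
  toFun S := ⟨fun i => decide (inl i ∈ S.1), by
    rw [← isIndepDomSet_paraSqSetOfCut_iff, ← S.2.eq_paraSqSetOfCut]; exact S.2⟩
  invFun a := ⟨paraSqSetOfCut a.1, isIndepDomSet_paraSqSetOfCut_iff.mpr a.2⟩
  left_inv S := Subtype.ext S.2.eq_paraSqSetOfCut.symm
  right_inv a := by ext; simp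

end ParaSq

lemma numIDSParaSq_eq_numNoIsolatedFalse (n : ℕ) :
    numIDSParaSq n = numNoIsolatedFalse false (n + 1) :=
  Nat.card_congr (paraSqIndepDomSetEquiv n)

/-- `q 1 = 2`, `q 2 = 4`, `q 3 = 7`, and `q n = 2·q (n-1) - q (n-2) + q (n-3)` for
`n ≥ 4`, where `q n` is the number of independent dominating sets of `Q n`. -/
theorem numIDSParaSq_recurrence :
    numIDSParaSq 1 = 2 ∧ numIDSParaSq 2 = 4 ∧ numIDSParaSq 3 = 7 ∧
      ∀ n : ℕ, 4 ≤ n →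
        (numIDSParaSq n : ℤ) =
          2 * numIDSParaSq (n - 1) - numIDSParaSq (n - 2) + numIDSParaSq (n - 3) := by
  simp only [numIDSParaSq_eq_numNoIsolatedFalse]
  obtain ⟨h₂, h₃, h₄⟩ := numNoIsolatedFalse_false_two_three_four
  refine ⟨h₂, h₃, h₄, fun n hn => ?_⟩
  obtain ⟨m, rfl⟩ := Nat.exists_eq_add_of_le' hn
  have h := numNoIsolatedFalse_false_recurrence (m + 2)
  rw [show m + 4 + 1 = m + 2 + 3 by omega, show m + 4 - 1 + 1 = m + 2 + 2 by omega,
    show m + 4 - 2 + 1 = m + 2 + 1 by omega, show m + 4 - 3 + 1 = m + 2 by omega]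
  omega
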